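/- Let R and T be positive integers with R ≤ T, and let J be a nonnegative integer. If R < T, then the number of sequences (a_1, …, a_R) of positive integers with a_1 + ⋯ + a_R = T and with exactly J indices i such that a_i = 1 equals C(R,J)·C(T−R−1, R−J−1). If R = T, then this number equals 1 when J = T (and 0 otherwise). -/

import Mathlib

/-!
Subtracting `1` from every entry turns the sequences into tuples `b` of naturals with sum `T - R`
and exactly `J` zeros. Such a `b` is determined by its zero set (`C(R, J)` choices) and by its
restriction to the complement, a composition of `T - R` into `R - J` positive parts
(`C(T - R - 1, R - J - 1)` choices, by stars and bars).
-/

/-- Binomial coefficient `C(p,q)` with the conventions `C(0,0)=1` and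
`C(p,q)=0` whenever `q < 0` or `q > p`. -/
def intChoose (p q : ℤ) : ℤ :=
  if 0 ≤ q ∧ q ≤ p then (p.toNat).choose q.toNat else 0

open Finset

lemma intChoose_natCast (p q : ℕ) : intChoose p q = p.choose q := by
  unfold intChoose
  split_ifs with h
  · simp
  · rw [Nat.choose_eq_zero_of_lt (by omega), Nat.cast_zero]

lemma intChoose_of_neg (p : ℤ) {q : ℤ} (hq : q < 0) : intChoose p q = 0 :=
  if_neg fun h => by omega

def positiveShiftEquiv {ι : Type*} (P : (ι → ℕ) → Prop) :
    {a : ι → ℕ // (∀ i, 1 ≤ a i) ∧ P a} ≃ {b : ι → ℕ // P (b + 1)} where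
  toFun a := ⟨a.1 - 1, by
    convert a.2.2
    ext i
    have := a.2.1 i
    simp only [Pi.add_apply, Pi.sub_apply, Pi.one_apply]
    omega⟩
  invFun b := ⟨b.1 + 1, fun i => by simp, b.2⟩
  left_inv a := by
    ext i
    have := a.2.1 i
    simp only [Pi.add_apply, Pi.sub_apply, Pi.one_apply]
    omega
  right_inv b := by ext i; simp

section Compositions

variable {ι : Type*} [Fintype ι]

lemma sum_add_one (b : ι → ℕ) : ∑ i, (b i + 1) = ∑ i, b i + Fintype.card ι := by
  simp [sum_add_distrib]

theorem card_sum_eq (m : ℕ) :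
    Nat.card {b : ι → ℕ // ∑ i, b i = m} = (Fintype.card ι + m - 1).choose m := by
  classical
  rw [← Nat.card_congr (Sym.equivNatSumOfFintype ι m), Nat.card_eq_fintype_card,
    Sym.card_sym_eq_choose]

instance (n : ℕ) : Finite {a : ι → ℕ // (∀ i, 1 ≤ a i) ∧ ∑ i, a i = n} := by
  classical
  have : Finite {b : ι → ℕ // ∑ i, b i = n} := .of_equiv _ (Sym.equivNatSumOfFintype ι n)
  exact .of_injective (fun a => (⟨a.1, a.2.2⟩ : {b : ι → ℕ // ∑ i, b i = n}))
    fun a a' h => Subtype.ext (congrArg Subtype.val h :)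

theorem card_pos_sum_eq {n : ℕ} (hn : 0 < n) (hι : 0 < Fintype.card ι) :
    Nat.card {a : ι → ℕ // (∀ i, 1 ≤ a i) ∧ ∑ i, a i = n} =
      (n - 1).choose (Fintype.card ι - 1) := by
  rw [Nat.card_congr (positiveShiftEquiv _)]
  simp only [Pi.add_apply, Pi.one_apply, sum_add_one]
  rcases le_or_gt (Fintype.card ι) n with h | h
  · obtain ⟨m, rfl⟩ := Nat.exists_eq_add_of_le h
    simp only [add_comm _ (Fintype.card ι), Nat.add_left_cancel_iff]
    rw [card_sum_eq, Nat.choose_symm_of_eq_add (a := m) (b := Fintype.card ι - 1) (by omega)]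
  · have : IsEmpty {b : ι → ℕ // ∑ i, b i + Fintype.card ι = n} := ⟨fun b => by omega⟩
    rw [Nat.card_of_isEmpty, Nat.choose_eq_zero_of_lt (by omega)]

lemma sum_eq_zero_iff_card_zeros (b : ι → ℕ) :
    ∑ i, b i = 0 ↔ #{i | b i = 0} = Fintype.card ι := by
  rw [Fintype.sum_eq_zero_iff_of_nonneg fun _ => Nat.zero_le _, ← card_univ, card_filter_eq_iff]
  simp [funext_iff]

theorem card_zero_sum_zeros_eq_ite (J : ℕ) :
    Nat.card {b : ι → ℕ // ∑ i, b i = 0 ∧ #{i | b i = 0} = J} =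
      if J = Fintype.card ι then 1 else 0 := by
  split_ifs with hJ
  · subst hJ
    refine Nat.card_eq_one_iff_exists.2 ⟨⟨0, by simp⟩, fun b => Subtype.ext ?_⟩
    exact (Fintype.sum_eq_zero_iff_of_nonneg fun _ => Nat.zero_le _).1 b.2.1
  · have : IsEmpty {b : ι → ℕ // ∑ i, b i = 0 ∧ #{i | b i = 0} = J} :=
      ⟨fun b => hJ (b.2.2.symm.trans ((sum_eq_zero_iff_card_zeros b.1).1 b.2.1))⟩
    exact Nat.card_of_isEmpty

theorem card_sum_zeros_eq_zero_of_le {m J : ℕ} (hm : 0 < m) (hJ : Fintype.card ι ≤ J) :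
    Nat.card {b : ι → ℕ // ∑ i, b i = m ∧ #{i | b i = 0} = J} = 0 := by
  have : IsEmpty {b : ι → ℕ // ∑ i, b i = m ∧ #{i | b i = 0} = J} := by
    refine ⟨fun ⟨b, hsum, hzeros⟩ => ?_⟩
    have hle : #{i | b i = 0} ≤ Fintype.card ι := card_filter_le univ _
    have := (sum_eq_zero_iff_card_zeros b).2 (by omega)
    omega
  exact Nat.card_of_isEmpty

theorem card_pos_sum_ones_eq_card_sum_zeros (n J : ℕ) :
    Nat.card {a : ι → ℕ //
        (∀ i, 1 ≤ a i) ∧ ∑ i, a i = Fintype.card ι + n ∧ #{i | a i = 1} = J} =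
      Nat.card {b : ι → ℕ // ∑ i, b i = n ∧ #{i | b i = 0} = J} := by
  rw [Nat.card_congr (positiveShiftEquiv _)]
  simp only [Pi.add_apply, Pi.one_apply, sum_add_one, add_eq_right,
    add_comm _ (Fintype.card ι), add_right_inj]

variable [DecidableEq ι]

def extendByZero (s : Finset ι) (c : {i // i ∉ s} → ℕ) (i : ι) : ℕ :=
  if h : i ∈ s then 0 else c ⟨i, h⟩

lemma sum_extendByZero (s : Finset ι) (c : {i // i ∉ s} → ℕ) :
    ∑ i, extendByZero s c i = ∑ i, c i := by
  rw [← Fintype.sum_subtype_add_sum_subtype (· ∈ s),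
    sum_eq_zero fun i _ => dif_pos i.2, zero_add]
  exact Fintype.sum_congr _ _ fun i => dif_neg i.2

lemma filter_extendByZero_eq_zero {s : Finset ι} {c : {i // i ∉ s} → ℕ}
    (hc : ∀ i, 1 ≤ c i) :
    ({i | extendByZero s c i = 0} : Finset ι) = s := by
  ext i
  by_cases h : i ∈ s
  · simp [extendByZero, h]
  · simpa [extendByZero, h] using Nat.one_le_iff_ne_zero.1 (hc ⟨i, h⟩)

lemma extendByZero_restrict (b : ι → ℕ) :
    extendByZero {i | b i = 0} (fun i => b i) = b := by
  ext i
  by_cases h : b i = 0 <;> simp [extendByZero, h]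

theorem card_sum_zeros_eq_choose_mul_choose {m J : ℕ} (hm : 0 < m) (hJ : J < Fintype.card ι) :
    Nat.card {b : ι → ℕ // ∑ i, b i = m ∧ #{i | b i = 0} = J} =
      (Fintype.card ι).choose J * (m - 1).choose (Fintype.card ι - J - 1) := by
  let glue (p : Σ s : {s : Finset ι // #s = J},
      {c : {i // i ∉ s.1} → ℕ // (∀ i, 1 ≤ c i) ∧ ∑ i, c i = m}) :
      {b : ι → ℕ // ∑ i, b i = m ∧ #{i | b i = 0} = J} :=
    ⟨extendByZero p.1.1 p.2.1, by rw [sum_extendByZero, p.2.2.2],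
      by rw [filter_extendByZero_eq_zero p.2.2.1, p.1.2]⟩
  have hglue : Function.Bijective glue := by
    constructor
    · rintro ⟨⟨s, hs⟩, c, hc⟩ ⟨⟨s', hs'⟩, c', hc'⟩ h
      have h0 : extendByZero s c = extendByZero s' c' := congrArg Subtype.val h
      obtain rfl : s = s' := by
        rw [← filter_extendByZero_eq_zero (s := s) (c := c) hc.1,
          ← filter_extendByZero_eq_zero (s := s') (c := c') hc'.1, h0]
      obtain rfl : c = c' := funext fun i => by
        simpa [extendByZero, i.2] using congrFun h0 i
      rfl
    · rintro ⟨b, hsum, hzeros⟩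
      refine ⟨⟨⟨_, hzeros⟩, fun i => b i, fun i => ?_, ?_⟩,
        Subtype.ext (extendByZero_restrict b)⟩
      · simpa [Nat.one_le_iff_ne_zero] using i.2
      · have := sum_extendByZero {i | b i = 0} (fun i => b i)
        rw [extendByZero_restrict] at this
        exact this.symm.trans hsum
  have hfiber (s : {s : Finset ι // #s = J}) :
      Nat.card {c : {i // i ∉ s.1} → ℕ // (∀ i, 1 ≤ c i) ∧ ∑ i, c i = m} =
        (m - 1).choose (Fintype.card ι - J - 1) := by
    rw [card_pos_sum_eq hm] <;> simp [Fintype.card_subtype_compl, s.2]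
    omega
  rw [← Nat.card_congr (Equiv.ofBijective glue hglue), Nat.card_sigma]
  simp only [hfiber, sum_const, card_univ, Fintype.card_finset_len, smul_eq_mul]

end Compositions

theorem stmt_0 (R T J : ℕ) (hRT : R ≤ T) :
    (R < T →
      (Nat.card {a : Fin R → ℕ // (∀ i, 1 ≤ a i) ∧ (∑ i, a i) = T ∧
          (Finset.univ.filter (fun i => a i = 1)).card = J} : ℤ) =
        intChoose (R : ℤ) (J : ℤ) * intChoose ((T : ℤ) - R - 1) ((R : ℤ) - J - 1)) ∧
    (R = T →
      Nat.card {a : Fin R → ℕ // (∀ i, 1 ≤ a i) ∧ (∑ i, a i) = T ∧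
          (Finset.univ.filter (fun i => a i = 1)).card = J} =
        if J = T then 1 else 0) := by
  obtain ⟨m, rfl⟩ := Nat.exists_eq_add_of_le hRT
  have hshift := card_pos_sum_ones_eq_card_sum_zeros (ι := Fin R) m J
  rw [Fintype.card_fin] at hshift
  rw [hshift]
  refine ⟨fun hm => ?_, fun hm => ?_⟩
  · rcases lt_or_ge J R with hJ | hJ
    · rw [card_sum_zeros_eq_choose_mul_choose (by omega) (by simpa), Fintype.card_fin,
        intChoose_natCast, show ((R + m : ℕ) : ℤ) - R - 1 = (m - 1 : ℕ) by omega,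
        show (R : ℤ) - J - 1 = (R - J - 1 : ℕ) by omega, intChoose_natCast]
      push_cast
      rfl
    · rw [card_sum_zeros_eq_zero_of_le (by omega) (by simpa)]
      rcases hJ.eq_or_lt with rfl | hJ
      · rw [intChoose_of_neg _ (show (R : ℤ) - R - 1 < 0 by omega), mul_zero, Nat.cast_zero]
      · rw [intChoose_natCast, Nat.choose_eq_zero_of_lt hJ]
        simp
  · obtain rfl : m = 0 := by omega
    simpa using card_zero_sum_zeros_eq_ite (ι := Fin R) J
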